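/- The set $A$ of orientation-preserving homeomorphisms of the circle which commute with some nontrivial finite-order rotation generates the group $\mathrm{Homeo}_0(\mathbb{S}^1)$. -/

import Mathlib

/-!
Let `C` be the subgroup generated by `RotComm`. It contains every rotation and every element of
`Homeo₀(S¹)` commuting with the rotation by `1/n` for some `n ≥ 2`; such elements are built from
homeomorphisms of `[0, 1]` as maps with `1/n`-periodic lifts.

Let `H` be supported in a short arc and write `H_c` for its conjugate by the rotation by `c`.
Then `H * H_{1/2}` and `H * H_{1/3} * H_{2/3}` commute with a rotation of finite order, so they
lie in `C`. Conjugating `H * H_{1/2}` by two periodic maps that are linear near the support turns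
it into `H * H_{1/3}`; rotating gives `H_{1/3} * H_{2/3} ∈ C`, hence `H ∈ C`. Conjugation by
periodic maps that squash an arc reduces maps supported in a half circle to this case.

Finally, a lift `F` of `f` satisfies `F (x + 1/2) = F x + 1/2` for some `x`, because
`F (x + 1/2) - F x - 1/2` changes sign over half a period. So `f` agrees on `[x, x + 1/2]` with a
`1/2`-periodic element `a ∈ C`, and `a⁻¹ * f` is supported in a half circle.
-/

noncomputable section

/-- The circle `ℝ/ℤ`. -/
abbrev S1 : Type := AddCircle (1 : ℝ)

/-- The projection `ℝ → ℝ/ℤ`. -/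

def pr : ℝ → S1 := fun x => (x : S1)

instance instGroupHomeomorph (X : Type) [TopologicalSpace X] : Group (X ≃ₜ X) where
  mul f g := g.trans f
  one := Homeomorph.refl X
  inv := Homeomorph.symm
  mul_assoc a b c := Homeomorph.ext fun _ => rfl
  one_mul a := Homeomorph.ext fun _ => rfl
  mul_one a := Homeomorph.ext fun _ => rfl
  inv_mul_cancel a := Homeomorph.ext fun x => a.symm_apply_apply x

/-- `F` is a lift of the circle homeomorphism `f`: an increasing homeomorphism of `ℝ`
commuting with integer translations and projecting to `f`. -/

def IsLift (f : S1 ≃ₜ S1) (F : ℝ ≃ₜ ℝ) : Prop :=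
  StrictMono F ∧ (∀ x : ℝ, F (x + 1) = F x + 1) ∧ ∀ x : ℝ, f (pr x) = pr (F x)

/-- `f` is an orientation-preserving homeomorphism of the circle. -/

def IsOP (f : S1 ≃ₜ S1) : Prop := ∃ F : ℝ ≃ₜ ℝ, IsLift f F

/-- The group `Homeo₀(S¹)` of orientation-preserving homeomorphisms of the circle. -/

def Homeo0S1 : Subgroup (S1 ≃ₜ S1) where
  carrier := {f | IsOP f}
  one_mem' := ⟨Homeomorph.refl ℝ, strictMono_id, fun _ => rfl, fun _ => rfl⟩
  mul_mem' := by
    rintro a b ⟨A, hA1, hA2, hA3⟩ ⟨B, hB1, hB2, hB3⟩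
    refine ⟨B.trans A, hA1.comp hB1, fun x => ?_, fun x => ?_⟩
    · show A (B (x + 1)) = A (B x) + 1
      rw [hB2, hA2]
    · show a (b (pr x)) = pr (A (B x))
      rw [hB3, hA3]
  inv_mem' := by
    rintro a ⟨A, h1, h2, h3⟩
    refine ⟨A.symm, fun s t hst => ?_, fun x => ?_, fun x => ?_⟩
    · by_contra hc
      push_neg at hc
      have h := h1.monotone hc
      rw [A.apply_symm_apply, A.apply_symm_apply] at h
      exact absurd hst (not_lt.mpr h)
    · apply A.injective
      simp [h2 (A.symm x), A.apply_symm_apply]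
    · show a.symm (pr x) = pr (A.symm x)
      have h := h3 (A.symm x)
      rw [A.apply_symm_apply] at h
      rw [← h, a.symm_apply_apply]

/-- The set of orientation-preserving homeomorphisms of the circle commuting with some
nontrivial finite-order rotation. -/

def RotComm : Set (S1 ≃ₜ S1) :=
  {f | IsOP f ∧ ∃ α : S1, α ≠ 0 ∧ (∃ n : ℕ, 0 < n ∧ n • α = 0) ∧ ∀ θ : S1, f (θ + α) = f θ + α}

open Set Function

theorem pr_add (x y : ℝ) : pr (x + y) = pr x + pr y := rfl

theorem map_add_intCast {F : ℝ → ℝ} (hF : ∀ x, F (x + 1) = F x + 1) (x : ℝ) (k : ℤ) :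
    F (x + k) = F x + k := by
  have hper : Periodic (fun x => F x - x) 1 := fun x => by simp only [hF]; ring
  have := hper.int_mul k x
  simp only [mul_one] at this
  linarith

theorem symm_add_one {F : ℝ ≃ₜ ℝ} (hF : ∀ x, F (x + 1) = F x + 1) (x : ℝ) :
    F.symm (x + 1) = F.symm x + 1 :=
  F.injective (by rw [hF, F.apply_symm_apply, F.apply_symm_apply])

theorem surjective_of_add_one {F : ℝ → ℝ} (hc : Continuous F)
    (hF : ∀ x, F (x + 1) = F x + 1) : Surjective F := by
  intro y
  set k := ⌊y - F 0⌋
  have hk : F k = F 0 + k := by simpa using map_add_intCast hF 0 k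
  have hk1 : F (k + 1) = F 0 + k + 1 := by rw [hF, hk]
  have hy : y ∈ Icc (F k) (F (k + 1)) := by
    rw [hk, hk1]
    constructor <;> linarith [Int.floor_le (y - F 0), Int.lt_floor_add_one (y - F 0)]
  obtain ⟨x, -, hx⟩ := intermediate_value_Icc (by linarith) hc.continuousOn hy
  exact ⟨x, hx⟩

theorem periodic_pr_comp {F : ℝ → ℝ} (hF : ∀ x, F (x + 1) = F x + 1) :
    Periodic (fun x => pr (F x)) 1 := fun x => by
  simp only [hF]
  exact AddCircle.coe_add_period 1 (F x)

def circleHomeo (F : ℝ ≃ₜ ℝ) (hF : ∀ x, F (x + 1) = F x + 1) : S1 ≃ₜ S1 where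
  toFun := (periodic_pr_comp hF).lift
  invFun := (periodic_pr_comp (symm_add_one hF)).lift
  left_inv θ := QuotientAddGroup.induction_on θ fun x => by
    simp only [pr, Periodic.lift_coe, Homeomorph.symm_apply_apply]
  right_inv θ := QuotientAddGroup.induction_on θ fun x => by
    simp only [pr, Periodic.lift_coe, Homeomorph.apply_symm_apply]
  continuous_toFun := (continuous_quotient_mk'.comp F.continuous).quotient_liftOn' _
  continuous_invFun := (continuous_quotient_mk'.comp F.symm.continuous).quotient_liftOn' _

theorem exists_isLift {P : ℝ → ℝ} (hmono : StrictMono P) (hc : Continuous P)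
    (hP : ∀ x, P (x + 1) = P x + 1) : ∃ f : S1 ≃ₜ S1, ∃ F : ℝ ≃ₜ ℝ, ⇑F = P ∧ IsLift f F :=
  let F := (hmono.orderIsoOfSurjective P (surjective_of_add_one hc hP)).toHomeomorph
  ⟨circleHomeo F hP, F, rfl, hmono, hP, fun _ => rfl⟩

section Lift

variable {f g : S1 ≃ₜ S1} {F G : ℝ ≃ₜ ℝ}

theorem IsLift.apply_pr (h : IsLift f F) (x : ℝ) : f (pr x) = pr (F x) := h.2.2 x

theorem IsLift.mem_homeo0S1 (h : IsLift f F) : f ∈ Homeo0S1 := ⟨F, h⟩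

theorem IsLift.mul (hf : IsLift f F) (hg : IsLift g G) : IsLift (f * g) (G.trans F) :=
  ⟨hf.1.comp hg.1, fun x => by simp only [Homeomorph.trans_apply, hg.2.1, hf.2.1],
    fun x => by
      show f (g (pr x)) = pr (F (G x))
      rw [hg.apply_pr, hf.apply_pr]⟩

theorem IsLift.inv (h : IsLift f F) : IsLift f⁻¹ F.symm :=
  ⟨fun x y hxy => h.1.lt_iff_lt.1 (by simpa using hxy), symm_add_one h.2.1, fun x =>
    f.injective (by
      show f (f.symm (pr x)) = f (pr (F.symm x))
      rw [f.apply_symm_apply, h.apply_pr, F.apply_symm_apply])⟩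

theorem IsLift.image_Icc (h : IsLift f F) (s t : ℝ) : F '' Icc s t = Icc (F s) (F t) :=
  (h.1.orderIsoOfSurjective F F.surjective).image_Icc s t

def arc (s t : ℝ) : Set S1 := pr '' Icc s t

theorem IsLift.image_arc (h : IsLift f F) (s t : ℝ) : f '' arc s t = arc (F s) (F t) := by
  rw [arc, arc, ← h.image_Icc, image_image, image_image]
  simp only [h.apply_pr]

end Lift

theorem disjoint_arc {s t s' t' : ℝ} (h₁ : t < s') (h₂ : t' < s + 1) :
    Disjoint (arc s t) (arc s' t') := by
  rw [disjoint_iff_forall_ne]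
  rintro _ ⟨x, hx, rfl⟩ _ ⟨y, hy, rfl⟩ hxy
  obtain ⟨k, hk⟩ := AddSubgroup.mem_zmultiples_iff.1 (QuotientAddGroup.eq.1 hxy)
  rw [zsmul_one] at hk
  have h0 : (0 : ℝ) < k := by linarith [hx.2, hy.1]
  have h1 : (k : ℝ) < 1 := by linarith [hx.1, hy.2]
  norm_cast at h0 h1
  omega

theorem exists_mem_Ico_pr_eq (θ : S1) (x : ℝ) : ∃ y ∈ Ico x (x + 1), pr y = θ := by
  have : θ ∈ ((↑) : ℝ → S1) '' Ico x (x + 1) := by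
    rw [AddCircle.coe_image_Ico_eq]
    trivial
  exact this

def rot (c : ℝ) : S1 ≃ₜ S1 := Homeomorph.addRight (pr c)

theorem rot_apply (c : ℝ) (θ : S1) : rot c θ = θ + pr c := rfl

theorem isLift_rot (c : ℝ) : IsLift (rot c) (Homeomorph.addRight c) :=
  ⟨fun _ _ h => by simpa using h, fun x => add_right_comm x 1 c, fun _ => rfl⟩

theorem rot_add (c d : ℝ) : rot (c + d) = rot c * rot d :=
  Homeomorph.ext fun θ => by
    show θ + pr (c + d) = θ + pr d + pr c
    rw [pr_add]; abel

theorem rot_one : rot 1 = 1 :=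
  Homeomorph.ext fun θ => by
    show θ + pr 1 = θ
    rw [show pr 1 = 0 from AddCircle.coe_period 1, add_zero]

theorem rot_image_arc (c s t : ℝ) : rot c '' arc s t = arc (s + c) (t + c) :=
  (isLift_rot c).image_arc s t

section Support

variable {X : Type} [TopologicalSpace X] {f g g' : X ≃ₜ X} {S T : Set X}

def SupportedIn (f : X ≃ₜ X) (S : Set X) : Prop := ∀ θ ∉ S, f θ = θ

theorem SupportedIn.apply_mem (h : SupportedIn f S) {θ : X} (hθ : θ ∈ S) : f θ ∈ S := by
  by_contra h'
  rw [f.injective (h _ h')] at h'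
  exact h' hθ

theorem SupportedIn.commute (hf : SupportedIn f S) (hg : SupportedIn g T)
    (hST : Disjoint S T) : Commute f g := Homeomorph.ext fun θ => by
  show f (g θ) = g (f θ)
  by_cases hS : θ ∈ S
  · rw [hg θ (disjoint_left.1 hST hS), hg _ (disjoint_left.1 hST (hf.apply_mem hS))]
  by_cases hT : θ ∈ T
  · rw [hf θ hS, hf _ (disjoint_right.1 hST (hg.apply_mem hT))]
  · rw [hf θ hS, hg θ hT, hf θ hS]

theorem SupportedIn.conj (h : SupportedIn f S) (g : X ≃ₜ X) :
    SupportedIn (g * f * g⁻¹) (g '' S) := fun θ hθ => by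
  show g (f (g.symm θ)) = θ
  rw [h _ fun h' => hθ ⟨_, h', g.apply_symm_apply θ⟩, g.apply_symm_apply]

theorem SupportedIn.conj_eq_conj (h : SupportedIn f S) (hg : EqOn g g' S) :
    g * f * g⁻¹ = g' * f * g'⁻¹ := by
  have hc : SupportedIn (g'⁻¹ * g) Sᶜ := fun θ hθ => by
    show g'.symm (g θ) = θ
    rw [hg (not_not.1 hθ), g'.symm_apply_apply]
  have := (hc.commute h disjoint_compl_left).eq
  calc g * f * g⁻¹ = g' * ((g'⁻¹ * g) * f) * g⁻¹ := by group
    _ = g' * f * g'⁻¹ := by rw [this]; group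

end Support

theorem closure_rotComm_le : Subgroup.closure RotComm ≤ Homeo0S1 :=
  (Subgroup.closure_le _).2 fun _ hf => hf.1

theorem pr_one_div_ne_zero {n : ℕ} (hn : 2 ≤ n) : pr (1 / n) ≠ 0 := by
  have hpos : (0 : ℝ) < 1 / n := by positivity
  rw [pr, Ne, AddCircle.coe_eq_zero_of_pos_iff 1 one_pos hpos]
  rintro ⟨m, hm⟩
  rw [nsmul_one] at hm
  have hm0 : 0 < m := by exact_mod_cast hm ▸ hpos
  have hm1 : (1 : ℝ) ≤ m := by exact_mod_cast hm0
  have : (1 : ℝ) / n < 1 := by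
    rw [div_lt_one (by positivity)]
    exact_mod_cast hn
  linarith

theorem nsmul_pr_one_div {n : ℕ} (hn : n ≠ 0) : n • pr (1 / n) = 0 := by
  rw [pr, ← AddCircle.coe_nsmul, nsmul_eq_mul, mul_one_div_cancel (by exact_mod_cast hn)]
  exact AddCircle.coe_period 1

theorem mem_closure_of_apply_add_one_div {f : S1 ≃ₜ S1} (hf : f ∈ Homeo0S1) {n : ℕ}
    (hn : 2 ≤ n) (h : ∀ θ, f (θ + pr (1 / n)) = f θ + pr (1 / n)) :
    f ∈ Subgroup.closure RotComm :=
  Subgroup.subset_closure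
    ⟨hf, pr (1 / n), pr_one_div_ne_zero hn, ⟨n, by omega, nsmul_pr_one_div (by omega)⟩, h⟩

theorem IsLift.mem_closure_of_add_one_div {w : S1 ≃ₜ S1} {W : ℝ ≃ₜ ℝ} (hW : IsLift w W)
    {n : ℕ} (hn : 2 ≤ n) (hper : ∀ x, W (x + 1 / n) = W x + 1 / n) :
    w ∈ Subgroup.closure RotComm :=
  mem_closure_of_apply_add_one_div hW.mem_homeo0S1 hn fun θ =>
    QuotientAddGroup.induction_on θ fun x => by
      show w (pr (x + 1 / n)) = w (pr x) + pr (1 / n)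
      rw [hW.apply_pr, hW.apply_pr, hper, pr_add]

theorem mem_closure_of_rot_conj_eq {f : S1 ≃ₜ S1} (hf : f ∈ Homeo0S1) {n : ℕ} (hn : 2 ≤ n)
    (h : rot (1 / n) * f * (rot (1 / n))⁻¹ = f) : f ∈ Subgroup.closure RotComm :=
  mem_closure_of_apply_add_one_div hf hn fun θ =>
    (congrArg (fun g : S1 ≃ₜ S1 => g θ) (mul_inv_eq_iff_eq_mul.1 h)).symm

theorem rot_mem_closure (c : ℝ) : rot c ∈ Subgroup.closure RotComm :=
  mem_closure_of_apply_add_one_div (isLift_rot c).mem_homeo0S1 le_rfl fun θ => by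
    simp only [rot_apply]
    abel

theorem conj_mem_closure_iff {g f : S1 ≃ₜ S1} (hg : g ∈ Subgroup.closure RotComm) :
    g * f * g⁻¹ ∈ Subgroup.closure RotComm ↔ f ∈ Subgroup.closure RotComm := by
  rw [Subgroup.mul_mem_cancel_right _ (inv_mem hg), Subgroup.mul_mem_cancel_left _ hg]

def cellLift (q : ℝ → ℝ) (z : ℝ) : ℝ := z + (q (Int.fract z) - Int.fract z)

section CellLift

variable {q : ℝ → ℝ}

theorem cellLift_add_one (z : ℝ) : cellLift q (z + 1) = cellLift q z + 1 := by
  simp only [cellLift, Int.fract_add_one]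
  ring

theorem cellLift_eq_floor_add (z : ℝ) : cellLift q z = ⌊z⌋ + q (Int.fract z) := by
  rw [cellLift, ← Int.self_sub_floor]
  ring

theorem continuous_cellLift (hqc : Continuous q) (hq0 : q 0 = 0) (hq1 : q 1 = 1) :
    Continuous (cellLift q) :=
  continuous_id.add ((hqc.continuousOn.sub continuousOn_id).comp_fract'' (by simp [hq0, hq1]))

theorem strictMono_cellLift (hq : StrictMono q) (hq0 : q 0 = 0) (hq1 : q 1 = 1) :
    StrictMono (cellLift q) := by
  intro z z' h
  rw [cellLift_eq_floor_add, cellLift_eq_floor_add]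
  rcases (Int.floor_le_floor h.le).eq_or_lt with he | hlt
  · have : Int.fract z < Int.fract z' := by
      rw [← Int.self_sub_floor, ← Int.self_sub_floor, he]
      linarith
    rw [he]
    linarith [hq this]
  · have h1 : q (Int.fract z) < 1 := hq1 ▸ hq (Int.fract_lt_one z)
    have h2 : 0 ≤ q (Int.fract z') := hq0 ▸ hq.monotone (Int.fract_nonneg z')
    have h3 : (⌊z⌋ : ℝ) + 1 ≤ ⌊z'⌋ := by exact_mod_cast hlt
    linarith

end CellLift

theorem exists_periodic_mem_closure {n : ℕ} (hn : 2 ≤ n) {q : ℝ → ℝ} (hq : StrictMono q)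
    (hqc : Continuous q) (hq0 : q 0 = 0) (hq1 : q 1 = 1) :
    ∃ w ∈ Subgroup.closure RotComm, ∃ W : ℝ ≃ₜ ℝ, IsLift w W ∧
      (∀ x, W (x + 1 / n) = W x + 1 / n) ∧ ∀ t ∈ Ico (0 : ℝ) (1 / n), W t = q (n * t) / n := by
  have hn0 : (0 : ℝ) < n := by positivity
  set P : ℝ → ℝ := fun y => cellLift q (n * y) / n
  have hmono : StrictMono P := fun y y' h =>
    div_lt_div_of_pos_right (strictMono_cellLift hq hq0 hq1 (mul_lt_mul_of_pos_left h hn0)) hn0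
  have hcont : Continuous P :=
    ((continuous_cellLift hqc hq0 hq1).comp (continuous_const.mul continuous_id)).div_const _
  have hper : ∀ y, P (y + 1 / n) = P y + 1 / n := fun y => by
    simp only [P]
    rw [mul_add, mul_one_div_cancel hn0.ne', cellLift_add_one, add_div]
  have hper1 : ∀ y, P (y + 1) = P y + 1 := fun y => by
    simp only [P]
    rw [mul_add, mul_one]
    have := map_add_intCast (F := cellLift q) cellLift_add_one (n * y) n
    rw [Int.cast_natCast] at this
    rw [this, add_div, div_self hn0.ne']
  obtain ⟨w, W, hWP, hW⟩ := exists_isLift hmono hcont hper1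
  refine ⟨w, hW.mem_closure_of_add_one_div hn (hWP ▸ hper), W, hW, hWP ▸ hper,
    fun t ht => ?_⟩
  have hnt : n * t ∈ Ico (0 : ℝ) 1 := by
    constructor
    · exact mul_nonneg hn0.le ht.1
    · have := ht.2
      rw [lt_div_iff₀ hn0] at this
      linarith
  rw [hWP]
  simp only [P, cellLift, Int.fract_eq_self.2 hnt]
  ring

theorem exists_periodic_linear_mem_closure {n : ℕ} (hn : 2 ≤ n) {s r : ℝ} (hs : 0 < s)
    (hs1 : s ≤ 1) (hr : 0 < r) (hr1 : r < 1 / n) :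
    ∃ w ∈ Subgroup.closure RotComm, ∃ W : ℝ ≃ₜ ℝ, IsLift w W ∧
      (∀ x, W (x + 1 / n) = W x + 1 / n) ∧ ∀ t ∈ Icc 0 r, W t = s * t := by
  have hn0 : (0 : ℝ) < n := by positivity
  set a := n * r
  have ha0 : 0 < a := by positivity
  have ha1 : a < 1 := by rwa [lt_div_iff₀ hn0, mul_comm] at hr1
  set k := (1 - s * a) / (1 - a)
  have hk : 1 ≤ k := by rw [le_div_iff₀ (by linarith)]; nlinarith
  -- the piecewise linear map through `(0, 0)`, `(a, s * a)` and `(1, 1)`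
  set q : ℝ → ℝ := fun u => max (s * u) (1 - k * (1 - u))
  have hq : StrictMono q := fun u v h =>
    max_lt_max (mul_lt_mul_of_pos_left h hs) (by nlinarith)
  have hqc : Continuous q := by fun_prop
  have hq0 : q 0 = 0 := by simp only [q]; rw [max_eq_left] <;> linarith
  have hq1 : q 1 = 1 := by simp only [q]; rw [max_eq_right] <;> linarith
  have hqlin : ∀ u ∈ Icc 0 a, q u = s * u := fun u hu => by
    refine max_eq_left ?_
    have : 1 - s * u ≤ k * (1 - u) := by
      rw [div_mul_eq_mul_div, le_div_iff₀ (by linarith)]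
      nlinarith [hu.2]
    linarith
  obtain ⟨w, hw, W, hW, hper, hval⟩ := exists_periodic_mem_closure hn hq hqc hq0 hq1
  refine ⟨w, hw, W, hW, hper, fun t ht => ?_⟩
  have htn : t ∈ Ico (0 : ℝ) (1 / n) := ⟨ht.1, ht.2.trans_lt hr1⟩
  rw [hval t htn, hqlin _ ⟨mul_nonneg hn0.le ht.1, mul_le_mul_of_nonneg_left ht.2 hn0.le⟩]
  field_simp

theorem SupportedIn.rot_conj {H : S1 ≃ₜ S1} {s t : ℝ} (h : SupportedIn H (arc s t))
    (c : ℝ) : SupportedIn (rot c * H * (rot c)⁻¹) (arc (s + c) (t + c)) :=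
  rot_image_arc c s t ▸ h.conj (rot c)

theorem rot_conj_rot_conj (c d : ℝ) (H : S1 ≃ₜ S1) :
    rot c * (rot d * H * (rot d)⁻¹) * (rot c)⁻¹ = rot (c + d) * H * (rot (c + d))⁻¹ := by
  rw [rot_add]
  group

def PairsMemClosure (ℓ d : ℝ) : Prop :=
  ∀ H ∈ Homeo0S1, SupportedIn H (arc 0 ℓ) →
    H * (rot d * H * (rot d)⁻¹) ∈ Subgroup.closure RotComm

theorem pairsMemClosure_half {ℓ : ℝ} (hℓ : ℓ < 1 / 2) : PairsMemClosure ℓ (1 / 2) := by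
  intro H hH hs
  set K := rot (1 / 2) * H * (rot (1 / 2))⁻¹
  have hK : K ∈ Homeo0S1 :=
    mul_mem (mul_mem (isLift_rot _).mem_homeo0S1 hH) (inv_mem (isLift_rot _).mem_homeo0S1)
  have hc : Commute H K :=
    hs.commute (hs.rot_conj (1 / 2)) (disjoint_arc (by linarith) (by linarith))
  refine mem_closure_of_rot_conj_eq (n := 2) (mul_mem hH hK) le_rfl ?_
  push_cast
  calc rot (1 / 2) * (H * K) * (rot (1 / 2))⁻¹
        = K * (rot (1 / 2) * K * (rot (1 / 2))⁻¹) := by simp only [K]; group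
    _ = K * H := by rw [rot_conj_rot_conj, add_halves, rot_one]; group
    _ = H * K := hc.eq.symm

theorem mem_closure_of_pairsMemClosure_third {ℓ : ℝ} (hℓ : ℓ < 1 / 3)
    (hP : PairsMemClosure ℓ (1 / 3)) {H : S1 ≃ₜ S1} (hH : H ∈ Homeo0S1)
    (hs : SupportedIn H (arc 0 ℓ)) : H ∈ Subgroup.closure RotComm := by
  set H₁ := rot (1 / 3) * H * (rot (1 / 3))⁻¹
  set H₂ := rot (2 / 3) * H * (rot (2 / 3))⁻¹
  have hrot : ∀ c, rot c ∈ Homeo0S1 := fun c => (isLift_rot c).mem_homeo0S1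
  have hc : Commute H (H₁ * H₂) :=
    (hs.commute (hs.rot_conj _) (disjoint_arc (by linarith) (by linarith))).mul_right
      (hs.commute (hs.rot_conj _) (disjoint_arc (by linarith) (by linarith)))
  have hT : H * H₁ * H₂ ∈ Subgroup.closure RotComm := by
    have hmem : H * H₁ * H₂ ∈ Homeo0S1 := by
      refine mul_mem (mul_mem hH ?_) ?_ <;>
        exact mul_mem (mul_mem (hrot _) hH) (inv_mem (hrot _))
    refine mem_closure_of_rot_conj_eq (n := 3) hmem (by norm_num) ?_
    push_cast
    calc rot (1 / 3) * (H * H₁ * H₂) * (rot (1 / 3))⁻¹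
        = H₁ * (rot (1 / 3) * H₁ * (rot (1 / 3))⁻¹) *
            (rot (1 / 3) * H₂ * (rot (1 / 3))⁻¹) := by
          simp only [H₁]; group
      _ = H₁ * H₂ * H := by
          rw [rot_conj_rot_conj, rot_conj_rot_conj, show (1 / 3 + 2 / 3 : ℝ) = 1 by norm_num,
            rot_one]
          norm_num [H₂]
      _ = H * H₁ * H₂ := by rw [mul_assoc H, hc.eq]
  have hpair : H₁ * H₂ ∈ Subgroup.closure RotComm := by
    have h := (conj_mem_closure_iff (rot_mem_closure (1 / 3))).2 (hP H hH hs)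
    have e : H₁ * H₂ = rot (1 / 3) * (H * H₁) * (rot (1 / 3))⁻¹ :=
      calc H₁ * H₂ = H₁ * (rot (1 / 3) * H₁ * (rot (1 / 3))⁻¹) := by
            rw [rot_conj_rot_conj]; norm_num [H₂]
        _ = rot (1 / 3) * (H * H₁) * (rot (1 / 3))⁻¹ := by simp only [H₁]; group
    rw [e]
    exact h
  convert mul_mem hT (inv_mem hpair) using 1
  group

/-- On the support of `H' = w⁻¹ * H * w` the map `w` turns `rot d` into `rot d'`, so conjugating
`H' * (rot d * H' * (rot d)⁻¹)` by `w` gives `H * (rot d' * H * (rot d')⁻¹)`. -/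
theorem PairsMemClosure.transfer {ℓ ℓ' d d' : ℝ} {w : S1 ≃ₜ S1} {W : ℝ ≃ₜ ℝ}
    (hw : w ∈ Subgroup.closure RotComm) (hW : IsLift w W) (hW0 : W 0 = 0) (hWℓ : W ℓ' = ℓ)
    (hWd : ∀ x ∈ Icc 0 ℓ', W (x + d) = W x + d') (hP : PairsMemClosure ℓ' d) :
    PairsMemClosure ℓ d' := by
  intro H hH hs
  set H' := w⁻¹ * H * w
  have hs' : SupportedIn H' (arc 0 ℓ') := by
    have h0 : W.symm 0 = 0 := by rw [W.symm_apply_eq, hW0]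
    have hℓ : W.symm ℓ = ℓ' := by rw [W.symm_apply_eq, hWℓ]
    have := hs.conj w⁻¹
    rwa [hW.inv.image_arc, h0, hℓ, inv_inv] at this
  have hH' : H' ∈ Homeo0S1 :=
    mul_mem (mul_mem (inv_mem (closure_rotComm_le hw)) hH) (closure_rotComm_le hw)
  have heq : EqOn (w * rot d) (rot d' * w) (arc 0 ℓ') := by
    rintro _ ⟨x, hx, rfl⟩
    show w (pr x + pr d) = w (pr x) + pr d'
    rw [← pr_add, hW.apply_pr, hW.apply_pr, hWd x hx, pr_add]
  have key : w * (H' * (rot d * H' * (rot d)⁻¹)) * w⁻¹ = H * (rot d' * H * (rot d')⁻¹) :=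
    calc _ = H * ((w * rot d) * H' * (w * rot d)⁻¹) := by simp only [H']; group
      _ = H * ((rot d' * w) * H' * (rot d' * w)⁻¹) := by rw [hs'.conj_eq_conj heq]
      _ = _ := by simp only [H']; group
  rw [← key]
  exact (conj_mem_closure_iff hw).2 (hP H' hH' hs')

theorem mem_closure_of_supportedIn_small {H : S1 ≃ₜ S1} (hH : H ∈ Homeo0S1)
    (hs : SupportedIn H (arc 0 (1 / 40))) : H ∈ Subgroup.closure RotComm := by
  -- `w₁` moves the partner at distance `1/2` to distance `5/12`, then `w₂` moves it to `1/3`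
  obtain ⟨w₁, hw₁, W₁, hW₁, hper₁, hlin₁⟩ := exists_periodic_linear_mem_closure (n := 3)
    (s := 1 / 2) (r := 1 / 4) (by norm_num) (by norm_num) (by norm_num) (by norm_num)
    (by norm_num)
  obtain ⟨w₂, hw₂, W₂, hW₂, -, hlin₂⟩ := exists_periodic_linear_mem_closure (n := 2)
    (s := 4 / 5) (r := 9 / 20) (by norm_num) (by norm_num) (by norm_num) (by norm_num)
    (by norm_num)
  push_cast at hper₁
  have hP₁ : PairsMemClosure (1 / 32) (5 / 12) := by
    refine (pairsMemClosure_half (by norm_num)).transfer (ℓ' := 1 / 16) hw₁ hW₁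
      (by simpa using hlin₁ 0 (by norm_num)) (by rw [hlin₁ _ (by norm_num)]; norm_num)
      fun x hx => ?_
    rw [show x + 1 / 2 = x + 1 / 6 + 1 / 3 by ring, hper₁,
      hlin₁ _ ⟨by linarith [hx.1], by linarith [hx.2]⟩, hlin₁ _ ⟨hx.1, by linarith [hx.2]⟩]
    ring
  have hP₂ : PairsMemClosure (1 / 40) (1 / 3) := by
    refine hP₁.transfer (ℓ' := 1 / 32) hw₂ hW₂
      (by simpa using hlin₂ 0 (by norm_num)) (by rw [hlin₂ _ (by norm_num)]; norm_num)
      fun x hx => ?_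
    rw [hlin₂ _ ⟨by linarith [hx.1], by linarith [hx.2]⟩, hlin₂ _ ⟨hx.1, by linarith [hx.2]⟩]
    ring
  exact mem_closure_of_pairsMemClosure_third (by norm_num) hP₂ hH hs

theorem mem_closure_of_supportedIn_half {H : S1 ≃ₜ S1} (hH : H ∈ Homeo0S1)
    (hs : SupportedIn H (arc 0 (1 / 2))) : H ∈ Subgroup.closure RotComm := by
  obtain ⟨w₁, hw₁, W₁, hW₁, hper₁, hlin₁⟩ := exists_periodic_linear_mem_closure (n := 3)
    (s := 1 / 10) (r := 1 / 6) (by norm_num) (by norm_num) (by norm_num) (by norm_num)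
    (by norm_num)
  obtain ⟨w₂, hw₂, W₂, hW₂, -, hlin₂⟩ := exists_periodic_linear_mem_closure (n := 2)
    (s := 1 / 14) (r := 7 / 20) (by norm_num) (by norm_num) (by norm_num) (by norm_num)
    (by norm_num)
  push_cast at hper₁
  have h0 : W₂ (W₁ 0) = 0 := by
    rw [hlin₁ 0 (by norm_num), mul_zero, hlin₂ 0 (by norm_num), mul_zero]
  have hhalf : W₂ (W₁ (1 / 2)) = 1 / 40 := by
    rw [show (1 / 2 : ℝ) = 1 / 6 + 1 / 3 by norm_num, hper₁, hlin₁ _ (by norm_num),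
      hlin₂ _ (by norm_num)]
    norm_num
  have hs' := hs.conj (w₂ * w₁)
  rw [(hW₂.mul hW₁).image_arc, Homeomorph.trans_apply, Homeomorph.trans_apply, h0,
    hhalf] at hs'
  have hw := mul_mem hw₂ hw₁
  have hmem := closure_rotComm_le hw
  exact (conj_mem_closure_iff hw).1
    (mem_closure_of_supportedIn_small (mul_mem (mul_mem hmem hH) (inv_mem hmem)) hs')

theorem mem_closure_of_supportedIn_arc {H : S1 ≃ₜ S1} {c : ℝ} (hH : H ∈ Homeo0S1)
    (hs : SupportedIn H (arc c (c + 1 / 2))) : H ∈ Subgroup.closure RotComm := by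
  have hs' := hs.rot_conj (-c)
  rw [add_neg_cancel, add_neg_cancel_comm] at hs'
  have hmem := (isLift_rot (-c)).mem_homeo0S1
  exact (conj_mem_closure_iff (rot_mem_closure (-c))).1
    (mem_closure_of_supportedIn_half (mul_mem (mul_mem hmem hH) (inv_mem hmem)) hs')

theorem IsLift.exists_add_half {f : S1 ≃ₜ S1} {F : ℝ ≃ₜ ℝ} (h : IsLift f F) :
    ∃ x, F (x + 1 / 2) = F x + 1 / 2 := by
  set φ : ℝ → ℝ := fun x => F (x + 1 / 2) - F x - 1 / 2
  have hφ : φ (1 / 2) = -φ 0 := by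
    simp only [φ]
    rw [show (1 / 2 : ℝ) + 1 / 2 = 0 + 1 by norm_num, h.2.1, zero_add]
    ring
  have hc : Continuous φ := by fun_prop
  have h0 : (0 : ℝ) ∈ uIcc (φ 0) (φ (1 / 2)) := by
    rw [hφ, mem_uIcc]
    rcases le_total 0 (φ 0) with h | h
    · exact Or.inr ⟨by linarith, h⟩
    · exact Or.inl ⟨h, by linarith⟩
  obtain ⟨x, -, hx⟩ := intermediate_value_uIcc hc.continuousOn h0
  exact ⟨x, by simp only [φ] at hx; linarith⟩

theorem IsLift.exists_mem_closure_eqOn {f : S1 ≃ₜ S1} {F : ℝ ≃ₜ ℝ} (h : IsLift f F)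
    {x : ℝ} (hx : F (x + 1 / 2) = F x + 1 / 2) :
    ∃ a ∈ Subgroup.closure RotComm, ∀ y ∈ Ico x (x + 1 / 2), a (pr y) = f (pr y) := by
  -- `F` on `[x, x + 1/2]`, rescaled to `[0, 1]`
  set q : ℝ → ℝ := fun t => 2 * (F (x + t / 2) - F x)
  have hq : StrictMono q := fun t t' ht => by
    have := h.1 (show x + t / 2 < x + t' / 2 by linarith)
    simp only [q]
    linarith
  have hqc : Continuous q := by fun_prop
  have hq0 : q 0 = 0 := by simp [q]
  have hq1 : q 1 = 1 := by simp only [q]; rw [hx]; ring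
  obtain ⟨w, hw, W, hW, -, hval⟩ := exists_periodic_mem_closure le_rfl hq hqc hq0 hq1
  refine ⟨rot (F x) * w * rot (-x),
    mul_mem (mul_mem (rot_mem_closure _) hw) (rot_mem_closure _), fun y hy => ?_⟩
  have hyx : y + -x ∈ Ico (0 : ℝ) (1 / (2 : ℕ)) := by
    push_cast
    constructor <;> linarith [hy.1, hy.2]
  show w (pr y + pr (-x)) + pr (F x) = f (pr y)
  rw [← pr_add, hW.apply_pr, hval _ hyx, ← pr_add, h.apply_pr]
  simp only [q]
  push_cast
  ring_nf

/-- The set of orientation-preserving circle homeomorphisms commuting with some nontrivial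
finite-order rotation generates the group `Homeo₀(S¹)`. -/
theorem stmt14 (f : S1 ≃ₜ S1) (hf : IsOP f) : f ∈ Subgroup.closure RotComm := by
  obtain ⟨F, hF⟩ := hf
  obtain ⟨x, hx⟩ := hF.exists_add_half
  obtain ⟨a, ha, hagree⟩ := hF.exists_mem_closure_eqOn hx
  have hs : SupportedIn (a⁻¹ * f) (arc (x + 1 / 2) (x + 1 / 2 + 1 / 2)) := by
    intro θ hθ
    obtain ⟨y, hy, rfl⟩ := exists_mem_Ico_pr_eq θ x
    have hy' : y < x + 1 / 2 := not_le.1 fun h => hθ ⟨y, ⟨h, by linarith [hy.2]⟩, rfl⟩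
    show a.symm (f (pr y)) = pr y
    rw [← hagree y ⟨hy.1, hy'⟩, a.symm_apply_apply]
  have hmem : a⁻¹ * f ∈ Homeo0S1 :=
    mul_mem (inv_mem (closure_rotComm_le ha)) hF.mem_homeo0S1
  simpa using mul_mem ha (mem_closure_of_supportedIn_arc hmem hs)
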